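/- Let n₁, n₂, n₃ : Ω → ℝ³ be a smooth orthonormal frame field on an open set Ω ⊂ ℝ³ (pairwise orthogonal unit vectors at each point). Then for each i, |∇nᵢ|² = (∇·nᵢ)² + (nᵢ·(∇×nᵢ))² + |nᵢ×(∇×nᵢ)|² + ∇·[(nᵢ·∇)nᵢ − (∇·nᵢ)nᵢ] pointwise. -/

import Mathlib

open scoped BigOperators

/-- Partial derivative ∂ⱼ nₖ of a vector field `n : ℝ³ → ℝ³` at `x`. -/
noncomputable def pd (n : (Fin 3 → ℝ) → (Fin 3 → ℝ)) (x : Fin 3 → ℝ) (j k : Fin 3) : ℝ :=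
  fderiv ℝ n x (Pi.single j 1) k

/-- Divergence of a vector field on ℝ³. -/
noncomputable def div3 (n : (Fin 3 → ℝ) → (Fin 3 → ℝ)) (x : Fin 3 → ℝ) : ℝ :=
  ∑ j : Fin 3, pd n x j j

/-- Curl of a vector field on ℝ³. -/
noncomputable def curl3 (n : (Fin 3 → ℝ) → (Fin 3 → ℝ)) (x : Fin 3 → ℝ) : Fin 3 → ℝ :=
  fun i => pd n x (i + 1) (i + 2) - pd n x (i + 2) (i + 1)

/-- Dot product on ℝ³. -/
def dot3 (a b : Fin 3 → ℝ) : ℝ := ∑ i : Fin 3, a i * b i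

/-- Cross product on ℝ³. -/
def cross3 (a b : Fin 3 → ℝ) : Fin 3 → ℝ :=
  fun i => a (i + 1) * b (i + 2) - a (i + 2) * b (i + 1)

/-- The convective derivative (n·∇)n. -/
noncomputable def convect (n : (Fin 3 → ℝ) → (Fin 3 → ℝ)) (x : Fin 3 → ℝ) : Fin 3 → ℝ :=
  fun k => ∑ j : Fin 3, n x j * pd n x j k

open ContinuousLinearMap

theorem stmt_13 (Ω : Set (Fin 3 → ℝ)) (hΩ : IsOpen Ω)
    (n : Fin 3 → (Fin 3 → ℝ) → (Fin 3 → ℝ))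
    (hsmooth : ∀ i, ContDiffOn ℝ (⊤ : ℕ∞) (n i) Ω)
    (horth : ∀ x ∈ Ω, ∀ i j : Fin 3,
      dot3 (n i x) (n j x) = if i = j then 1 else 0)
    (x : Fin 3 → ℝ) (hx : x ∈ Ω) (i : Fin 3) :
    ∑ j : Fin 3, ∑ k : Fin 3, (pd (n i) x j k) ^ 2 =
      (div3 (n i) x) ^ 2 + (dot3 (n i x) (curl3 (n i) x)) ^ 2 +
        dot3 (cross3 (n i x) (curl3 (n i) x)) (cross3 (n i x) (curl3 (n i) x)) +
        div3 (fun y => convect (n i) y - div3 (n i) y • n i y) x := by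
  classical
  set m := n i with hm_def
  have hxnhds : Ω ∈ nhds x := hΩ.mem_nhds hx
  have hm2 : ContDiffAt ℝ 2 m x := ((hsmooth i).contDiffAt hxnhds).of_le (WithTop.coe_le_coe.mpr (le_top : (2 : ℕ∞) ≤ ⊤))
  have hmdiff : DifferentiableAt ℝ m x := hm2.differentiableAt (by norm_num)
  have hD : ContDiffAt ℝ 1 (fderiv ℝ m) x := hm2.fderiv_right (by norm_num)
  have hDdiff : DifferentiableAt ℝ (fderiv ℝ m) x := hD.differentiableAt (by norm_num)
  have hsymm := hm2.isSymmSndFDerivAt (by norm_num)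
  set e : Fin 3 → (Fin 3 → ℝ) := fun j => Pi.single j 1 with he
  set Df : Fin 3 → ((Fin 3 → ℝ) →L[ℝ] ℝ) :=
    fun k => (proj k : (Fin 3 → ℝ) →L[ℝ] ℝ).comp (fderiv ℝ m x) with hDf
  set Dg : Fin 3 → Fin 3 → ((Fin 3 → ℝ) →L[ℝ] ℝ) :=
    fun j k => (((proj k : (Fin 3 → ℝ) →L[ℝ] ℝ).comp (apply ℝ (Fin 3 → ℝ) (e j))).comp
      (fderiv ℝ (fderiv ℝ m) x)) with hDg
  have hf : ∀ k : Fin 3, HasFDerivAt (fun y => m y k) (Df k) x := fun k =>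
    (proj k : (Fin 3 → ℝ) →L[ℝ] ℝ).hasFDerivAt.comp x hmdiff.hasFDerivAt
  have hg : ∀ j k : Fin 3, HasFDerivAt (fun y => pd m y j k) (Dg j k) x := fun j k =>
    (((proj k : (Fin 3 → ℝ) →L[ℝ] ℝ).comp
      (apply ℝ (Fin 3 → ℝ) (e j))).hasFDerivAt.comp x hDdiff.hasFDerivAt)
  set Dc : Fin 3 → ((Fin 3 → ℝ) →L[ℝ] ℝ) := fun k =>
    (∑ j : Fin 3, (m x j • Dg j k + pd m x j k • Df j)) -
      ((∑ j : Fin 3, pd m x j j) • Df k + m x k • ∑ j : Fin 3, Dg j j) with hDc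
  have hFc : ∀ k : Fin 3, HasFDerivAt
      (fun y => (∑ j : Fin 3, m y j * pd m y j k) - (∑ j : Fin 3, pd m y j j) * m y k)
      (Dc k) x := by
    intro k
    exact ((HasFDerivAt.fun_sum fun j _ => (hf j).mul (hg j k)).sub
      ((HasFDerivAt.fun_sum fun j _ => hg j j).mul (hf k)))
  have hF : HasFDerivAt (fun y => convect m y - div3 m y • m y)
      ((ContinuousLinearMap.pi Dc : (Fin 3 → ℝ) →L[ℝ] (Fin 3 → ℝ))) x := by
    apply hasFDerivAt_pi''
    intro k
    have h : (proj k : ((Fin 3) → ℝ) →L[ℝ] ℝ).comp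
        ((ContinuousLinearMap.pi Dc : (Fin 3 → ℝ) →L[ℝ] (Fin 3 → ℝ))) = Dc k := by
      ext v; simp
    rw [h]
    exact hFc k
  have hdivF : div3 (fun y => convect m y - div3 m y • m y) x =
      (∑ k : Fin 3, ∑ j : Fin 3, pd m x j k * pd m x k j) -
        (∑ j : Fin 3, pd m x j j) * (∑ j : Fin 3, pd m x j j) := by
    have hpd : ∀ k : Fin 3,
        pd (fun y => convect m y - div3 m y • m y) x k k = Dc k (e k) := by
      intro k
      show fderiv ℝ (fun y => convect m y - div3 m y • m y) x (e k) k = _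
      rw [hF.fderiv]
      rfl
    have hcancel : ∑ k : Fin 3, ∑ j : Fin 3,
        m x j * fderiv ℝ (fderiv ℝ m) x (e k) (e j) k
        = ∑ k : Fin 3, m x k * ∑ j : Fin 3, fderiv ℝ (fderiv ℝ m) x (e k) (e j) j := by
      have h1 : ∀ k j : Fin 3, fderiv ℝ (fderiv ℝ m) x (e k) (e j) k =
          fderiv ℝ (fderiv ℝ m) x (e j) (e k) k := fun k j => congrFun (hsymm (e k) (e j)) k
      simp only [Fin.sum_univ_three]
      linear_combination m x 1 * h1 0 1 + m x 2 * h1 0 2 + m x 0 * h1 1 0 +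
        m x 2 * h1 1 2 + m x 0 * h1 2 0 + m x 1 * h1 2 1
    have hDgval : ∀ j k p : Fin 3, (Dg j k) (e p) =
        fderiv ℝ (fderiv ℝ m) x (e p) (e j) k := fun j k p => rfl
    have hDfval : ∀ j p : Fin 3, (Df j) (e p) = pd m x p j := fun j p => rfl
    have hT : ∑ k : Fin 3, (∑ j : Fin 3, pd m x j j) * pd m x k k =
        (∑ j : Fin 3, pd m x j j) * ∑ j : Fin 3, pd m x j j :=
      (Finset.mul_sum _ _ _).symm
    calc div3 (fun y => convect m y - div3 m y • m y) x
        = ∑ k : Fin 3, Dc k (e k) := Finset.sum_congr rfl fun k _ => hpd k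
      _ = _ := by
          simp only [hDc, ContinuousLinearMap.sub_apply, ContinuousLinearMap.add_apply,
            ContinuousLinearMap.sum_apply, ContinuousLinearMap.coe_smul', Pi.smul_apply,
            smul_eq_mul, hDgval, hDfval]
          simp only [Finset.sum_sub_distrib, Finset.sum_add_distrib]
          rw [hcancel, hT]
          ring
  have hunit : m x 0 * m x 0 + m x 1 * m x 1 + m x 2 * m x 2 = 1 := by
    have h := horth x hx i i
    simpa [dot3, Fin.sum_univ_three] using h
  rw [hdivF]
  simp only [div3, dot3, curl3, cross3, Fin.sum_univ_three,
    show (0 : Fin 3) + 1 = 1 from rfl, show (0 : Fin 3) + 2 = 2 from rfl,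
    show (1 : Fin 3) + 1 = 2 from rfl, show (1 : Fin 3) + 2 = 0 from rfl,
    show (2 : Fin 3) + 1 = 0 from rfl, show (2 : Fin 3) + 2 = 1 from rfl]
  linear_combination (-((pd m x 1 2 - pd m x 2 1) ^ 2 + (pd m x 2 0 - pd m x 0 2) ^ 2 +
    (pd m x 0 1 - pd m x 1 0) ^ 2)) * hunit
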